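/- arXiv:1504.08334 — 4 statements merged into one kernel-verified Lean document; each statement's English description precedes it below -/
import Mathlib

section
/- Let q be odd and let φ(x) = (x - f·g^d)² + g with f, g ∈ 𝔽_q[t], -g not a square in 𝔽_q(t), d ≥ 1, and suppose the j-invariant of E_φ : Y² = (X - g)·φ(X) is non-constant. Then no element of the adjusted critical orbit {-φ(γ), φ²(γ), φ³(γ), …} (where γ = f·g^d) is a square in 𝔽_q(t). -/
/-!
Clearing denominators, a square in `𝔽_q(t)` of a polynomial is the square of a polynomial.
With `h = g - γ`, the orbit satisfies `φⁿ⁺¹(γ) = aₙ² + g` where `a₀ = 0`, `aₙ₊₁ = aₙ² + h`, so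
`deg aₙ₊₁ = 2ⁿ deg h`. Since `v² - a² = g` forces `deg a ≤ deg g` (in odd characteristic), squares
can only occur when `deg aₙ ≤ deg g`. Because `γ = f·g^d` with `d ≥ 1`, either `deg γ > deg g`, or
`γ = c·g` for a constant `c`. The cases `c = 1` and `g` constant make `j` constant; otherwise the
only remaining candidate is `φ²(γ) = ((1 - c)g)² + g`, which is not a square because
`(2e²g + 1)² - (2ev)² = 1` for `v² = (eg)² + g` would make `g` constant.
-/

open Polynomial

/-- The Weierstrass model of `E_φ : Y² = (X - g)·((X - γ)² + g)` with `γ = f·g^d`,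
obtained by expanding the cubic. -/
noncomputable def Ephi {Fq : Type*} [Field Fq] (f g : Fq[X]) (d : ℕ) :
    WeierstrassCurve (RatFunc Fq) :=
  let γ : RatFunc Fq := algebraMap Fq[X] (RatFunc Fq) (f * g ^ d)
  let G : RatFunc Fq := algebraMap Fq[X] (RatFunc Fq) g
  { a₁ := 0
    a₂ := -(2 * γ + G)
    a₃ := 0
    a₄ := γ ^ 2 + G + 2 * γ * G
    a₆ := -(G * (γ ^ 2 + G)) }

theorem isSquare_of_isSquare_algebraMap {R K : Type*} [CommRing R] [IsDomain R]
    [IsIntegrallyClosed R] [Field K] [Algebra R K] [IsFractionRing R K] {p : R}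
    (h : IsSquare (algebraMap R K p)) : IsSquare p := by
  obtain ⟨u, hu⟩ := h
  have hint : IsIntegral R u :=
    ⟨X ^ 2 - C p, monic_X_pow_sub_C p two_ne_zero, by simp [hu, sq]⟩
  obtain ⟨v, rfl⟩ := IsIntegrallyClosed.isIntegral_iff.mp hint
  exact ⟨v, IsFractionRing.injective R K (by rw [map_mul, hu])⟩

theorem FiniteField.two_ne_zero_of_odd_card {F : Type*} [Field F] [Fintype F]
    (h : Odd (Fintype.card F)) : (2 : F) ≠ 0 :=
  Ring.two_ne_zero fun hF => by
    have := FiniteField.even_card_of_char_two hF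
    rw [Nat.odd_iff] at h
    omega

namespace Polynomial

theorem exists_C_mul_eq_of_natDegree_mul_le {R : Type*} [Semiring R] [NoZeroDivisors R]
    {p g : R[X]} (h : (p * g).natDegree ≤ g.natDegree) : ∃ c, p * g = C c * g := by
  by_cases hp : p = 0
  · exact ⟨0, by simp [hp]⟩
  by_cases hg : g = 0
  · exact ⟨0, by simp [hg]⟩
  rw [natDegree_mul hp hg] at h
  exact ⟨p.coeff 0, by rw [← eq_C_of_natDegree_eq_zero (by omega)]⟩

theorem iterate_sq_sub_add_eq {R : Type*} [CommRing R] (γ g : R) (n : ℕ) :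
    (fun x => (x - γ) ^ 2 + g)^[n + 1] γ = ((fun y => y ^ 2 + (g - γ))^[n] 0) ^ 2 + g := by
  have hconj : Function.Semiconj (· + γ) (fun y => y ^ 2 + (g - γ))
      (fun x => (x - γ) ^ 2 + g) := fun y => by simp only [add_sub_cancel_right]; ring
  have horbit := hconj.iterate_right n 0
  simp only [zero_add] at horbit
  rw [Function.iterate_succ_apply', ← horbit, add_sub_cancel_right]

theorem natDegree_iterate_sq_add {R : Type*} [CommRing R] [NoZeroDivisors R] {h : R[X]}
    (hh : 0 < h.natDegree) (n : ℕ) :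
    ((fun y => y ^ 2 + h)^[n + 1] 0).natDegree = 2 ^ n * h.natDegree := by
  induction n with
  | zero => simp
  | succ n ih =>
    have hlt : h.natDegree < (((fun y => y ^ 2 + h)^[n + 1] 0) ^ 2).natDegree := by
      rw [natDegree_pow, ih]
      nlinarith [Nat.one_le_two_pow (n := n)]
    rw [Function.iterate_succ_apply', natDegree_add_eq_left_of_natDegree_lt hlt,
      natDegree_pow, ih, pow_succ]
    ring

variable {K : Type*} [Field K]

theorem not_isSquare_sq_add_of_natDegree_lt (h2 : (2 : K) ≠ 0) {a g : K[X]} (hg : g ≠ 0)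
    (hlt : g.natDegree < a.natDegree) : ¬ IsSquare (a ^ 2 + g) := by
  rintro ⟨v, hv⟩
  have hfac : (v - a) * (v + a) = g := by linear_combination -hv
  have hsub : v - a ≠ 0 := left_ne_zero_of_mul (hfac ▸ hg)
  have hadd : v + a ≠ 0 := right_ne_zero_of_mul (hfac ▸ hg)
  have : a.natDegree ≤ g.natDegree :=
    calc a.natDegree = (C 2 * a).natDegree := (natDegree_C_mul h2).symm
      _ = ((v + a) - (v - a)).natDegree := by rw [map_ofNat]; ring_nf
      _ ≤ max (v + a).natDegree (v - a).natDegree := natDegree_sub_le _ _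
      _ ≤ (v - a).natDegree + (v + a).natDegree := max_le (by omega) (by omega)
      _ = g.natDegree := by rw [← natDegree_mul hsub hadd, hfac]
  omega

theorem not_isSquare_sq_C_mul_add (h2 : (2 : K) ≠ 0) {e : K} {g : K[X]} (he : e ≠ 0)
    (hg : 0 < g.natDegree) : ¬ IsSquare ((C e * g) ^ 2 + g) := by
  rintro ⟨v, hv⟩
  have hunit : (C (2 * e ^ 2) * g + 1 - C (2 * e) * v) * (C (2 * e ^ 2) * g + 1 + C (2 * e) * v)
      = 1 := by
    simp only [C_mul, C_pow, map_ofNat]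
    linear_combination (4 * C e ^ 2) * hv
  have hminus := natDegree_eq_zero_of_isUnit (IsUnit.of_mul_eq_one _ hunit)
  have hplus := natDegree_eq_zero_of_isUnit (IsUnit.of_mul_eq_one_right _ hunit)
  have hsum : (C (4 * e ^ 2) * g + C 2).natDegree = 0 := by
    have : C (4 * e ^ 2) * g + C 2 = (C (2 * e ^ 2) * g + 1 - C (2 * e) * v)
        + (C (2 * e ^ 2) * g + 1 + C (2 * e) * v) := by
      simp only [C_mul, C_pow, map_ofNat]
      ring
    rw [this]
    exact Nat.le_zero.mp ((natDegree_add_le _ _).trans (by omega))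
  have h4 : (4 : K) * e ^ 2 ≠ 0 := by
    rw [show (4 : K) = 2 * 2 by norm_num]
    exact mul_ne_zero (mul_ne_zero h2 h2) (pow_ne_zero 2 he)
  rw [natDegree_add_C, natDegree_C_mul h4] at hsum
  omega

theorem not_isSquare_iterate_of_natDegree_lt (h2 : (2 : K) ≠ 0) {γ g : K[X]} (hg : g ≠ 0)
    (hpos : 0 < (g - γ).natDegree) {n : ℕ} (hlt : g.natDegree < 2 ^ n * (g - γ).natDegree) :
    ¬ IsSquare ((fun x => (x - γ) ^ 2 + g)^[n + 2] γ) := by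
  rw [iterate_sq_sub_add_eq]
  exact not_isSquare_sq_add_of_natDegree_lt h2 hg (by rwa [natDegree_iterate_sq_add hpos])

theorem not_isSquare_iterate_of_natDegree_lt_natDegree (h2 : (2 : K) ≠ 0) {γ g : K[X]}
    (hg : g ≠ 0) (hlt : g.natDegree < γ.natDegree) (n : ℕ) :
    ¬ IsSquare ((fun x => (x - γ) ^ 2 + g)^[n + 2] γ) := by
  have hdeg : (g - γ).natDegree = γ.natDegree := natDegree_sub_eq_right_of_natDegree_lt hlt
  refine not_isSquare_iterate_of_natDegree_lt h2 hg (by omega) ?_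
  rw [hdeg]
  nlinarith [Nat.one_le_two_pow (n := n)]

theorem not_isSquare_iterate_C_mul (h2 : (2 : K) ≠ 0) {c : K} (hc : c ≠ 1) {g : K[X]}
    (hg : 0 < g.natDegree) (n : ℕ) :
    ¬ IsSquare ((fun x => (x - C c * g) ^ 2 + g)^[n + 2] (C c * g)) := by
  have hsub : g - C c * g = C (1 - c) * g := by rw [C_sub, C_1]; ring
  have h1c : 1 - c ≠ 0 := sub_ne_zero.mpr hc.symm
  have hdeg : (g - C c * g).natDegree = g.natDegree := by rw [hsub, natDegree_C_mul h1c]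
  cases n with
  | zero =>
    rw [iterate_sq_sub_add_eq, Function.iterate_one, hsub, zero_pow two_ne_zero, zero_add]
    exact not_isSquare_sq_C_mul_add h2 h1c hg
  | succ n =>
    refine not_isSquare_iterate_of_natDegree_lt h2 (ne_zero_of_natDegree_gt hg) (by omega) ?_
    rw [hdeg, pow_succ]
    nlinarith [Nat.one_le_two_pow (n := n)]

end Polynomial

section Ephi

variable {K : Type*} [Field K] (f g : K[X]) (d : ℕ)

theorem Ephi_c₄ : (Ephi f g d).c₄ = 16 * ((algebraMap K[X] (RatFunc K) (f * g ^ d)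
    - algebraMap K[X] (RatFunc K) g) ^ 2 - 3 * algebraMap K[X] (RatFunc K) g) := by
  simp only [Ephi, WeierstrassCurve.c₄, WeierstrassCurve.b₂, WeierstrassCurve.b₄]
  ring

theorem Ephi_Δ : (Ephi f g d).Δ = -64 * algebraMap K[X] (RatFunc K) g *
    ((algebraMap K[X] (RatFunc K) g - algebraMap K[X] (RatFunc K) (f * g ^ d)) ^ 2
      + algebraMap K[X] (RatFunc K) g) ^ 2 := by
  simp only [Ephi, WeierstrassCurve.Δ, WeierstrassCurve.b₂, WeierstrassCurve.b₄,
    WeierstrassCurve.b₆, WeierstrassCurve.b₈]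
  ring

variable {f g d}

theorem Ephi_j_eq_C_of_mul_pow_eq (h : f * g ^ d = g) :
    ∃ r : K, (Ephi f g d).c₄ ^ 3 / (Ephi f g d).Δ = RatFunc.C r := by
  have hc : (Ephi f g d).c₄ ^ 3 = 1728 * (Ephi f g d).Δ := by
    rw [Ephi_c₄, Ephi_Δ, h]
    ring
  by_cases hΔ : (Ephi f g d).Δ = 0
  · exact ⟨0, by simp [hc, hΔ]⟩
  · exact ⟨1728, by rw [hc, mul_div_assoc, div_self hΔ, mul_one, map_ofNat]⟩

theorem Ephi_j_eq_C_of_natDegree_eq_zero (hγ : (f * g ^ d).natDegree = 0)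
    (hg : g.natDegree = 0) : ∃ r : K, (Ephi f g d).c₄ ^ 3 / (Ephi f g d).Δ = RatFunc.C r := by
  obtain ⟨b, hb⟩ := natDegree_eq_zero.mp hg
  obtain ⟨a, ha⟩ := natDegree_eq_zero.mp hγ
  refine ⟨(16 * ((a - b) ^ 2 - 3 * b)) ^ 3 / (-64 * b * ((b - a) ^ 2 + b) ^ 2), ?_⟩
  rw [Ephi_c₄, Ephi_Δ, ← ha, ← hb, RatFunc.algebraMap_C, RatFunc.algebraMap_C, map_div₀]
  push_cast [map_pow, map_mul, map_sub, map_add, map_neg, map_ofNat]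
  ring

end Ephi

theorem adjusted_critical_orbit_no_squares_general {Fq : Type*} [Field Fq] [Fintype Fq]
    (hq : Odd (Fintype.card Fq)) (f g : Fq[X]) (d : ℕ) (hd : 1 ≤ d)
    (hns : ¬ IsSquare (-(algebraMap Fq[X] (RatFunc Fq) g)))
    (hj : ¬ ∃ r : Fq, (Ephi f g d).c₄ ^ 3 / (Ephi f g d).Δ = RatFunc.C r) :
    ¬ IsSquare (-(algebraMap Fq[X] (RatFunc Fq) g)) ∧
    ∀ n, 2 ≤ n →
      ¬ IsSquare (algebraMap Fq[X] (RatFunc Fq)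
        ((fun x => (x - f * g ^ d) ^ 2 + g)^[n] (f * g ^ d))) := by
  have h2 := FiniteField.two_ne_zero_of_odd_card hq
  have hg : g ≠ 0 := by
    rintro rfl
    exact hns (by simp)
  refine ⟨hns, fun n hn hsq => ?_⟩
  obtain ⟨n, rfl⟩ := Nat.exists_eq_add_of_le' hn
  replace hsq := isSquare_of_isSquare_algebraMap hsq
  rcases lt_or_ge g.natDegree (f * g ^ d).natDegree with hlt | hle
  · exact not_isSquare_iterate_of_natDegree_lt_natDegree h2 hg hlt n hsq
  have hγ : f * g ^ d = f * g ^ (d - 1) * g := by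
    rw [mul_assoc, ← pow_succ, Nat.sub_add_cancel hd]
  obtain ⟨c, hc⟩ := exists_C_mul_eq_of_natDegree_mul_le (hγ ▸ hle)
  rw [hγ, hc] at hsq
  by_cases hc1 : c = 1
  · exact hj (Ephi_j_eq_C_of_mul_pow_eq (by rw [hγ, hc, hc1, C_1, one_mul]))
  rcases Nat.eq_zero_or_pos g.natDegree with hg0 | hgpos
  · refine hj (Ephi_j_eq_C_of_natDegree_eq_zero ?_ hg0)
    rw [hγ, hc]
    exact Nat.le_zero.mp ((natDegree_C_mul_le c g).trans hg0.le)
  · exact not_isSquare_iterate_C_mul h2 hc1 hgpos n hsq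

/-- if `q` is odd, `-g` is not a square in `𝔽_q(t)`, and the `j`-invariant
of `E_φ` is non-constant, then no element of the adjusted critical orbit
`{-φ(γ)} ∪ {φⁿ(γ) : n ≥ 2}` is a square in `𝔽_q(t)`. -/
theorem adjusted_critical_orbit_no_squares {Fq : Type*} [Field Fq] [Fintype Fq]
    (hq : Odd (Fintype.card Fq)) (f g : Fq[X]) (d : ℕ) (hd : 1 ≤ d)
    (hns : ¬ IsSquare (-(algebraMap Fq[X] (RatFunc Fq) g)))
    (hΔ : (Ephi f g d).Δ ≠ 0)
    (hj : ¬ ∃ r : Fq, (Ephi f g d).c₄ ^ 3 / (Ephi f g d).Δ = RatFunc.C r) :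
    ¬ IsSquare (-(algebraMap Fq[X] (RatFunc Fq) g)) ∧
    ∀ n, 2 ≤ n →
      ¬ IsSquare (algebraMap Fq[X] (RatFunc Fq)
        ((fun x => (x - f * g ^ d) ^ 2 + g)^[n] (f * g ^ d))) :=
  adjusted_critical_orbit_no_squares_general hq f g d hd hns hj
end

section
/- Let φ(x) = (x - f·g^d)² + g with f, g ∈ 𝔽_q[t], h = g - f·g^d, and γ = f·g^d. For all n ≥ 2, deg(φ^n(γ)) ≤ max{2^{n-1}·deg(h), deg(g)}, with equality when the two quantities are unequal. Consequently, if deg(h) ≥ 1, then deg(φ^n(γ)) = 2^{n-1}·deg(h) for all sufficiently large n, and in particular the critical orbit of φ is infinite (φ is post-critically infinite). -/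
/-!
Translating by the critical point `γ` conjugates `φ(x) = (x - γ)² + g` to `ψ(x) = x² + h`
with `h = g - γ`, so `φⁿ(γ) = ψⁿ(0) + γ` and `φⁿ⁺²(γ) = (ψⁿ⁺¹(0))² + g`. Squaring doubles
degrees, so `deg ψⁿ⁺¹(0) = 2ⁿ·deg h`, and a sum of two polynomials of different degrees has
the larger of the two degrees. Once `2ⁿ⁻¹·deg h > deg g` the degrees along the orbit are
unbounded, so the orbit is infinite.
-/

open Polynomial

theorem lt_two_pow_pred_mul {k n H : ℕ} (hH : 1 ≤ H) (hn : k + 2 ≤ n) : k < 2 ^ (n - 1) * H :=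
  calc
    k < n - 1 := by omega
    _ < 2 ^ (n - 1) := Nat.lt_two_pow_self
    _ ≤ 2 ^ (n - 1) * H := Nat.le_mul_of_pos_right _ hH

namespace Polynomial

variable {R : Type*}

theorem natDegree_add_eq_max_of_natDegree_ne [Semiring R] {p q : R[X]}
    (hpq : p.natDegree ≠ q.natDegree) : (p + q).natDegree = max p.natDegree q.natDegree := by
  rcases hpq.lt_or_gt with hlt | hgt
  · rw [natDegree_add_eq_right_of_natDegree_lt hlt, max_eq_right hlt.le]
  · rw [natDegree_add_eq_left_of_natDegree_lt hgt, max_eq_left hgt.le]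

theorem natDegree_iterate_sq_add_zero [Semiring R] [NoZeroDivisors R] (h : R[X]) (n : ℕ) :
    ((fun x => x ^ 2 + h)^[n + 1] 0).natDegree = 2 ^ n * h.natDegree := by
  induction n with
  | zero => simp
  | succ n ih =>
    rw [Function.iterate_succ_apply']
    have hsq : ((fun x => x ^ 2 + h)^[n + 1] 0 ^ 2).natDegree = 2 ^ (n + 1) * h.natDegree := by
      rw [natDegree_pow, ih, pow_succ]
      ring
    rcases h.natDegree.eq_zero_or_pos with hh | hh
    · rw [hh, mul_zero] at hsq ⊢
      exact Nat.le_zero.mp ((natDegree_add_le _ _).trans (max_le hsq.le hh.le))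
    · have hlt : h.natDegree < 2 ^ (n + 1) * h.natDegree :=
        lt_mul_left hh (Nat.one_lt_two_pow n.succ_ne_zero)
      rw [natDegree_add_eq_left_of_natDegree_lt (hsq ▸ hlt), hsq]

end Polynomial

section CriticalOrbit

variable {R : Type*} [CommRing R]

theorem iterate_sub_sq_add_self (γ g : R) (n : ℕ) :
    (fun x => (x - γ) ^ 2 + g)^[n] γ = (fun x => x ^ 2 + (g - γ))^[n] 0 + γ := by
  have hconj : Function.Semiconj (· + γ) (fun x => x ^ 2 + (g - γ)) (fun x => (x - γ) ^ 2 + g) :=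
    fun x => by ring
  simpa using (hconj.iterate_right n 0).symm

theorem iterate_add_two_sub_sq_add_self (γ g : R) (n : ℕ) :
    (fun x => (x - γ) ^ 2 + g)^[n + 2] γ = ((fun x => x ^ 2 + (g - γ))^[n + 1] 0) ^ 2 + g := by
  rw [iterate_sub_sq_add_self, Function.iterate_succ_apply']
  ring

variable [NoZeroDivisors R]

theorem natDegree_iterate_sub_sq_add_self (γ g : R[X]) {n : ℕ} (hn : 2 ≤ n) :
    ((fun x => (x - γ) ^ 2 + g)^[n] γ).natDegree ≤
        max (2 ^ (n - 1) * (g - γ).natDegree) g.natDegree ∧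
      (2 ^ (n - 1) * (g - γ).natDegree ≠ g.natDegree →
        ((fun x => (x - γ) ^ 2 + g)^[n] γ).natDegree =
          max (2 ^ (n - 1) * (g - γ).natDegree) g.natDegree) := by
  obtain ⟨m, rfl⟩ := Nat.exists_eq_add_of_le' hn
  have hsq : (((fun x => x ^ 2 + (g - γ))^[m + 1] 0) ^ 2).natDegree =
      2 ^ (m + 2 - 1) * (g - γ).natDegree := by
    rw [natDegree_pow, natDegree_iterate_sq_add_zero, show m + 2 - 1 = m + 1 by omega, pow_succ]
    ring
  rw [iterate_add_two_sub_sq_add_self, ← hsq]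
  exact ⟨natDegree_add_le _ _, natDegree_add_eq_max_of_natDegree_ne⟩

theorem natDegree_iterate_sub_sq_add_self_of_le {γ g : R[X]} (hh : 1 ≤ (g - γ).natDegree) {n : ℕ}
    (hn : g.natDegree + 2 ≤ n) :
    ((fun x => (x - γ) ^ 2 + g)^[n] γ).natDegree = 2 ^ (n - 1) * (g - γ).natDegree := by
  have hlt := lt_two_pow_pred_mul hh hn
  rw [(natDegree_iterate_sub_sq_add_self γ g (by omega)).2 hlt.ne', max_eq_left hlt.le]

theorem infinite_range_iterate_sub_sq_add_self {γ g : R[X]} (hh : 1 ≤ (g - γ).natDegree) :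
    (Set.range fun n : ℕ => (fun x => (x - γ) ^ 2 + g)^[n] γ).Infinite := by
  refine Set.Infinite.of_image natDegree (Set.infinite_of_forall_exists_gt fun a => ?_)
  refine ⟨_, ⟨_, ⟨a + g.natDegree + 2, rfl⟩, rfl⟩, ?_⟩
  rw [natDegree_iterate_sub_sq_add_self_of_le hh (by omega)]
  exact lt_two_pow_pred_mul hh (by omega)

end CriticalOrbit

theorem degree_critical_orbit_general {Fq : Type*} [Field Fq] (f g : Fq[X]) (d : ℕ) :
    (∀ n, 2 ≤ n →
      ((fun x => (x - f * g ^ d) ^ 2 + g)^[n] (f * g ^ d)).natDegree ≤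
        max (2 ^ (n - 1) * (g - f * g ^ d).natDegree) g.natDegree ∧
      (2 ^ (n - 1) * (g - f * g ^ d).natDegree ≠ g.natDegree →
        ((fun x => (x - f * g ^ d) ^ 2 + g)^[n] (f * g ^ d)).natDegree =
          max (2 ^ (n - 1) * (g - f * g ^ d).natDegree) g.natDegree)) ∧
    (1 ≤ (g - f * g ^ d).natDegree →
      (∃ N, ∀ n, N ≤ n →
        ((fun x => (x - f * g ^ d) ^ 2 + g)^[n] (f * g ^ d)).natDegree =
          2 ^ (n - 1) * (g - f * g ^ d).natDegree) ∧
      (Set.range fun n : ℕ =>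
        (fun x => (x - f * g ^ d) ^ 2 + g)^[n] (f * g ^ d)).Infinite) := by
  exact ⟨fun n hn => natDegree_iterate_sub_sq_add_self _ _ hn, fun hh =>
    ⟨⟨_, fun _ => natDegree_iterate_sub_sq_add_self_of_le hh⟩,
      infinite_range_iterate_sub_sq_add_self hh⟩⟩

/-- degree growth of the critical orbit of `φ(x) = (x - f·g^d)² + g`.
For `n ≥ 2`, `deg φⁿ(γ) ≤ max(2^{n-1}·deg h, deg g)` with equality when the two
quantities differ; if `deg h ≥ 1` then `deg φⁿ(γ) = 2^{n-1}·deg h` for large `n`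
and the critical orbit is infinite. -/
theorem degree_critical_orbit {Fq : Type*} [Field Fq] (f g : Fq[X]) (d : ℕ) (hd : 1 ≤ d) :
    (∀ n, 2 ≤ n →
      ((fun x => (x - f * g ^ d) ^ 2 + g)^[n] (f * g ^ d)).natDegree ≤
        max (2 ^ (n - 1) * (g - f * g ^ d).natDegree) g.natDegree ∧
      (2 ^ (n - 1) * (g - f * g ^ d).natDegree ≠ g.natDegree →
        ((fun x => (x - f * g ^ d) ^ 2 + g)^[n] (f * g ^ d)).natDegree =
          max (2 ^ (n - 1) * (g - f * g ^ d).natDegree) g.natDegree)) ∧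
    (1 ≤ (g - f * g ^ d).natDegree →
      (∃ N, ∀ n, N ≤ n →
        ((fun x => (x - f * g ^ d) ^ 2 + g)^[n] (f * g ^ d)).natDegree =
          2 ^ (n - 1) * (g - f * g ^ d).natDegree) ∧
      (Set.range fun n : ℕ =>
        (fun x => (x - f * g ^ d) ^ 2 + g)^[n] (f * g ^ d)).Infinite) :=
  degree_critical_orbit_general f g d
end

section
/- Let φ be a quadratic polynomial over a field K of characteristic ≠ 2, written φ(x) = (x-γ)² + c, and suppose φ^n is separable for all n. For each m ≥ 2 the map Φ_m(x,y) = (φ^{m-1}(x), y·(φ^{m-2}(x) - γ)) defines a morphism from the affine curve C_{2,m} : y² = φ^m(x) to the elliptic-type curve E_φ : Y² = (X - c)·φ(X). -/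
open Polynomial

/-- The curve `Y² = (X - c) φ(X)` receives `(X, Y) = (φ u, y (u - γ))` from `y² = φ (φ u)`,
since `φ u - c = (u - γ)²`. -/
theorem sq_mul_sub_eq_of_sq_eq_comp {R : Type*} [CommRing R] (φ : R → R) (γ c u y : R)
    (hφ : ∀ z, φ z = (z - γ) ^ 2 + c) (hy : y ^ 2 = φ (φ u)) :
    (y * (u - γ)) ^ 2 = (φ u - c) * φ (φ u) := by
  rw [mul_pow, hy, hφ u]
  ring

theorem map_to_elliptic_general {K : Type*} [Field K] (γ c : K) :
    ∀ m, 2 ≤ m → ∀ x y : K,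
      y ^ 2 = (fun z => (z - γ) ^ 2 + c)^[m] x →
      (y * ((fun z => (z - γ) ^ 2 + c)^[m - 2] x - γ)) ^ 2 =
        ((fun z => (z - γ) ^ 2 + c)^[m - 1] x - c) *
          (((fun z => (z - γ) ^ 2 + c)^[m - 1] x - γ) ^ 2 + c) := by
  rintro m hm x y hy
  obtain ⟨k, rfl⟩ : ∃ k, m = k + 2 := ⟨m - 2, by omega⟩
  set φ : K → K := fun z => (z - γ) ^ 2 + c
  have hφ : ∀ z, φ z = (z - γ) ^ 2 + c := fun _ => rfl
  rw [Function.iterate_succ_apply', Function.iterate_succ_apply'] at hy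
  rw [Nat.add_sub_cancel, show k + 2 - 1 = k + 1 from rfl, Function.iterate_succ_apply', ← hφ]
  exact sq_mul_sub_eq_of_sq_eq_comp φ γ c _ y hφ hy

/-- the map `Φ_m(x,y) = (φ^{m-1}(x), y·(φ^{m-2}(x) - γ))` sends points of
the curve `y² = φ^m(x)` to points of `E_φ : Y² = (X - c)·φ(X)`, where
`φ(x) = (x - γ)² + c`. -/
theorem map_to_elliptic {K : Type*} [Field K] (h2 : (2 : K) ≠ 0) (γ c : K)
    (hsep : ∀ n, 1 ≤ n →
      ((fun q : K[X] => q.comp ((X - C γ) ^ 2 + C c))^[n] (X : K[X])).Separable) :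
    ∀ m, 2 ≤ m → ∀ x y : K,
      y ^ 2 = (fun z => (z - γ) ^ 2 + c)^[m] x →
      (y * ((fun z => (z - γ) ^ 2 + c)^[m - 2] x - γ)) ^ 2 =
        ((fun z => (z - γ) ^ 2 + c)^[m - 1] x - c) *
          (((fun z => (z - γ) ^ 2 + c)^[m - 1] x - γ) ^ 2 + c) :=
  map_to_elliptic_general γ c
end

section
/- Let q be odd, K = 𝔽_q(t), and φ(x) = (x - γ)² + c ∈ K[x] a quadratic polynomial such that the adjusted critical orbit {-φ(γ)} ∪ {φ^n(γ) : n ≥ 2} contains no squares in K. Then for every n ≥ 1, the iterate φ^n is irreducible over K. -/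
/-!
Write `φ(x) = (x - γ)² + c`, so that `φⁿ⁺¹ = φⁿ ∘ φ` and `φⁿ⁺¹(γ) = φⁿ(c)`. If `f` is monic
irreducible with root `α`, then `f ∘ φ` is irreducible as soon as `α - c` is not a square in
`K(α)` (Capelli's lemma plus irreducibility of `(x - γ)² - (α - c)`), and this holds when the norm
`N(α - c) = (-1)^deg f · f(c)` is not a square in `K`. For `f = φⁿ` that norm is `-c = -φ(γ)` when
`n = 0` and `φⁿ⁺¹(γ)` when `n ≥ 1`, since `deg φⁿ = 2ⁿ`.
-/

open Polynomial IntermediateField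

theorem PowerBasis.norm_gen_sub_algebraMap {R S : Type*} [CommRing R] [Ring S] [Algebra R S]
    (pb : PowerBasis R S) (c : R) :
    Algebra.norm R (pb.gen - algebraMap R S c) = (-1) ^ pb.dim * (minpoly R pb.gen).eval c := by
  rw [Algebra.norm_eq_matrix_det pb.basis, map_sub, AlgHom.commutes, ← neg_sub, Matrix.det_neg,
    ← charpoly_leftMulMatrix, Matrix.eval_charpoly, Fintype.card_fin, Matrix.algebraMap_eq_diagonal]
  rfl

namespace Polynomial

theorem irreducible_X_sub_C_sq_sub_C {K : Type*} [Field K] (γ s : K)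
    (hs : ¬IsSquare s) : Irreducible ((X - C γ) ^ 2 - C s) := by
  have hmonic : ((X - C γ) ^ 2 - C s).Monic := by monicity!
  have hdeg : ((X - C γ) ^ 2 - C s).natDegree = 2 := by compute_degree!
  rw [hmonic.irreducible_iff_roots_eq_zero_of_degree_le_three (by omega) (by omega),
    Multiset.eq_zero_iff_forall_notMem]
  intro y hy
  have hy : (y - γ) ^ 2 - s = 0 := by simpa using (mem_roots hmonic.ne_zero).1 hy
  exact hs ⟨y - γ, by linear_combination -hy⟩

section Quadratic

variable {K : Type*} [Field K] (γ c : K)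

theorem monic_X_sub_C_sq_add_C : ((X - C γ) ^ 2 + C c).Monic := by monicity!

theorem natDegree_X_sub_C_sq_add_C : ((X - C γ) ^ 2 + C c).natDegree = 2 := by compute_degree!

theorem irreducible_comp_X_sub_C_sq_add_C {f : K[X]} (hmonic : f.Monic) (hf : Irreducible f)
    (hns : ¬IsSquare ((-1) ^ f.natDegree * f.eval c)) :
    Irreducible (f.comp ((X - C γ) ^ 2 + C c)) := by
  refine irreducible_comp hmonic (monic_X_sub_C_sq_add_C γ c) hf fun E _ _ α hα ↦ ?_
  have hint : IsIntegral K α := by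
    by_contra h
    exact hmonic.ne_zero (hα ▸ minpoly.eq_zero h)
  have hshift : ((X - C γ) ^ 2 + C c).map (algebraMap K K⟮α⟯) - C (AdjoinSimple.gen K α) =
      (X - C (algebraMap K K⟮α⟯ γ)) ^ 2 - C (AdjoinSimple.gen K α - algebraMap K K⟮α⟯ c) := by
    simp only [Polynomial.map_add, Polynomial.map_pow, Polynomial.map_sub, map_X, map_C, C_sub]
    ring
  rw [hshift]
  refine irreducible_X_sub_C_sq_sub_C _ _ fun hsq ↦ hns ?_
  have := hsq.map (Algebra.norm K)
  rwa [← adjoin.powerBasis_gen hint, PowerBasis.norm_gen_sub_algebraMap, adjoin.powerBasis_dim,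
    adjoin.powerBasis_gen, minpoly_gen, hα] at this

end Quadratic

section IterateCompRight

variable {R : Type*}

theorem Monic.iterate_comp_right [Semiring R] {p g : R[X]} (hp : p.Monic) (hg : g.Monic)
    (hg0 : g.natDegree ≠ 0) (n : ℕ) : ((fun q ↦ q.comp g)^[n] p).Monic := by
  induction n with
  | zero => exact hp
  | succ n ih => rw [Function.iterate_succ_apply']; exact ih.comp hg hg0

theorem natDegree_iterate_comp_right [Semiring R] [NoZeroDivisors R] (p g : R[X]) (n : ℕ) :
    ((fun q ↦ q.comp g)^[n] p).natDegree = p.natDegree * g.natDegree ^ n := by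
  induction n with
  | zero => simp
  | succ n ih => rw [Function.iterate_succ_apply', natDegree_comp, ih, pow_succ, mul_assoc]

theorem eval_iterate_comp_right [CommSemiring R] (p g : R[X]) (n : ℕ) (z : R) :
    ((fun q ↦ q.comp g)^[n] p).eval z = p.eval ((fun w ↦ g.eval w)^[n] z) := by
  induction n generalizing z with
  | zero => rfl
  | succ n ih => rw [Function.iterate_succ_apply', Function.iterate_succ_apply, eval_comp, ih]

end IterateCompRight

theorem irreducible_iterate_comp_X_sub_C_sq_add_C {K : Type*} [Field K] (γ c : K)
    (hns : ∀ n, ¬IsSquare ((-1) ^ 2 ^ n * (fun z ↦ (z - γ) ^ 2 + c)^[n] c)) (n : ℕ) :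
    Irreducible ((fun q ↦ q.comp ((X - C γ) ^ 2 + C c))^[n] (X : K[X])) := by
  induction n with
  | zero => exact irreducible_X
  | succ n ih =>
    rw [Function.iterate_succ_apply']
    refine irreducible_comp_X_sub_C_sq_add_C γ c
      (monic_X.iterate_comp_right (monic_X_sub_C_sq_add_C γ c)
        (by rw [natDegree_X_sub_C_sq_add_C]; exact two_ne_zero) n) ih ?_
    rw [natDegree_iterate_comp_right, eval_iterate_comp_right, natDegree_X_sub_C_sq_add_C]
    simpa using hns n

end Polynomial

theorem iterates_irreducible_general {Fq : Type*} [Field Fq]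
    (γ c : RatFunc Fq)
    (hns1 : ¬ IsSquare (-((γ - γ) ^ 2 + c)))
    (hnsn : ∀ n, 2 ≤ n →
      ¬ IsSquare ((fun z : RatFunc Fq => (z - γ) ^ 2 + c)^[n] γ)) :
    ∀ n, 1 ≤ n →
      Irreducible
        ((fun q : (RatFunc Fq)[X] => q.comp ((X - C γ) ^ 2 + C c))^[n]
          (X : (RatFunc Fq)[X])) := by
  refine fun n _ ↦ irreducible_iterate_comp_X_sub_C_sq_add_C γ c (fun n ↦ ?_) n
  rcases n with _ | n
  · simpa using hns1
  · have := hnsn (n + 2) (by omega)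
    rw [Function.iterate_succ_apply, sub_self, zero_pow two_ne_zero, zero_add] at this
    rwa [(even_two.pow_of_ne_zero n.succ_ne_zero).neg_one_pow, one_mul]

/-- Stoll's irreducibility criterion over `K = 𝔽_q(t)`, `q` odd.
If no element of the adjusted critical orbit `{-φ(γ)} ∪ {φⁿ(γ) : n ≥ 2}` of the
quadratic `φ(x) = (x-γ)² + c` is a square in `K`, then every iterate `φⁿ` is
irreducible over `K`. -/
theorem iterates_irreducible {Fq : Type*} [Field Fq] [Fintype Fq]
    (hq : Odd (Fintype.card Fq)) (γ c : RatFunc Fq)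
    (hns1 : ¬ IsSquare (-((γ - γ) ^ 2 + c)))
    (hnsn : ∀ n, 2 ≤ n →
      ¬ IsSquare ((fun z : RatFunc Fq => (z - γ) ^ 2 + c)^[n] γ)) :
    ∀ n, 1 ≤ n →
      Irreducible
        ((fun q : (RatFunc Fq)[X] => q.comp ((X - C γ) ^ 2 + C c))^[n]
          (X : (RatFunc Fq)[X])) :=
  iterates_irreducible_general γ c hns1 hnsn
end
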